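/- arXiv:1911.02590 — 5 statements merged into one kernel-verified Lean document; each statement's English description precedes it below -/
import Mathlib

section
/- (Lemma 2, unrolled SGD derivative.) Take learning rate α = 1 and let w_0 : Λ → W be a constant function (the initialization does not depend on λ). Define w_{i+1}(λ) = w_i(λ) − g(λ, w_i(λ)). Then every w_i is differentiable, and for each i and each λ the Fréchet derivative satisfies D w_{i+1}(λ) = −∑_{j=0}^{i} [ ∏_{k=0}^{j−1} ( I − H(λ, w_{i−k}(λ)) ) ] ∘ M(λ, w_{i−j}(λ)), where the product denotes composition of the linear maps taken left-to-right in order of increasing k, the empty product is the identity, and I is the identity map on W. -/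
open Topology

/-! Each SGD step `w ↦ w - g(λ, w)` has, by the chain rule, derivative
`D w_{i+1} = (I - H_i) ∘ D w_i - M_i`, and `D w_0 = 0` because the initialization is constant.
Unrolling this affine recurrence in the space of linear maps gives the stated sum. -/

section

variable {𝕜 E F G : Type*} [NontriviallyNormedField 𝕜]
  [NormedAddCommGroup E] [NormedSpace 𝕜 E] [NormedAddCommGroup F] [NormedSpace 𝕜 F]
  [NormedAddCommGroup G] [NormedSpace 𝕜 G]

theorem fderiv_apply_self {f : E → F → G} {u : E → F} {l : E}
    (hf : DifferentiableAt 𝕜 (Function.uncurry f) (l, u l))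
    (hu : DifferentiableAt 𝕜 u l) :
    fderiv 𝕜 (fun l' => f l' (u l')) l =
      (fderiv 𝕜 (f l) (u l)).comp (fderiv 𝕜 u l) + fderiv 𝕜 (fun l' => f l' (u l)) l := by
  set f' := fderiv 𝕜 (Function.uncurry f) (l, u l)
  have hf' := hf.hasFDerivAt
  have hpartial₂ : fderiv 𝕜 (f l) (u l) = f'.comp (ContinuousLinearMap.inr 𝕜 E F) :=
    (hf'.comp (u l) (hasFDerivAt_prodMk_right l (u l))).fderiv
  have hpartial₁ :
      fderiv 𝕜 (fun l' => f l' (u l)) l = f'.comp (ContinuousLinearMap.inl 𝕜 E F) :=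
    (hf'.comp (f := fun l' => (l', u l)) l (hasFDerivAt_prodMk_left l (u l))).fderiv
  have htotal : fderiv 𝕜 (fun l' => f l' (u l')) l =
      f'.comp ((ContinuousLinearMap.id 𝕜 E).prod (fderiv 𝕜 u l)) :=
    (hf'.comp (f := fun l' => (l', u l')) l ((hasFDerivAt_id l).prodMk hu.hasFDerivAt)).fderiv
  rw [htotal, hpartial₁, hpartial₂]
  ext v
  simp [← map_add, add_comm]

theorem fderiv_sub_apply_self {f : E → F → F} {u : E → F} {l : E}
    (hf : DifferentiableAt 𝕜 (Function.uncurry f) (l, u l))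
    (hu : DifferentiableAt 𝕜 u l) :
    fderiv 𝕜 (fun l' => u l' - f l' (u l')) l =
      (1 - fderiv 𝕜 (f l) (u l)).comp (fderiv 𝕜 u l) -
        fderiv 𝕜 (fun l' => f l' (u l)) l := by
  have hfu : DifferentiableAt 𝕜 (fun l' => f l' (u l')) l :=
    hf.comp (f := fun l' => (l', u l')) l (differentiableAt_id.prodMk hu)
  rw [fderiv_fun_sub hu hfu, fderiv_apply_self hf hu, ContinuousLinearMap.sub_comp,
    ContinuousLinearMap.one_def, ContinuousLinearMap.id_comp, sub_add_eq_sub_sub]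

theorem ContinuousLinearMap.eq_neg_sum_of_eq_comp_sub {A : ℕ → F →L[𝕜] F}
    {B D : ℕ → E →L[𝕜] F}
    (h₀ : D 0 = 0) (hD : ∀ i, D (i + 1) = (A i).comp (D i) - B i) (i : ℕ) :
    D (i + 1) = -∑ j ∈ Finset.range (i + 1),
      (((List.range j).map fun k => A (i - k)).prod).comp (B (i - j)) := by
  induction i with
  | zero => simp [hD 0, h₀, ContinuousLinearMap.one_def]
  | succ i ih =>
    have hshift : ∀ j, ((List.range (j + 1)).map fun k => A (i + 1 - k)).prod =
        A (i + 1) * ((List.range j).map fun k => A (i - k)).prod := by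
      intro j
      simp [List.range_succ_eq_map, List.map_map, Function.comp_def]
    rw [hD, ih, Finset.sum_range_succ' _ (i + 1)]
    simp only [hshift, ContinuousLinearMap.mul_def, ContinuousLinearMap.comp_assoc,
      ContinuousLinearMap.comp_neg, ContinuousLinearMap.comp_finsetSum]
    simp [ContinuousLinearMap.one_def, sub_eq_add_neg, add_comm]

end

theorem differentiable_gradient_right {E F : Type*} [NormedAddCommGroup E] [NormedSpace ℝ E]
    [NormedAddCommGroup F] [InnerProductSpace ℝ F] [CompleteSpace F]
    {L : E × F → ℝ} (hL : ContDiff ℝ 2 L) :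
    Differentiable ℝ (fun p : E × F => gradient (fun y => L (p.1, y)) p.2) := by
  have hpartial : ∀ p : E × F, fderiv ℝ (fun y => L (p.1, y)) p.2 =
      (fderiv ℝ L p).comp (ContinuousLinearMap.inr ℝ E F) := fun p =>
    ((hL.differentiable two_ne_zero p).hasFDerivAt.comp p.2
      (hasFDerivAt_prodMk_right p.1 p.2)).fderiv
  simp only [gradient, hpartial]
  have hL' : Differentiable ℝ (fderiv ℝ L) :=
    (hL.fderiv_right (m := 1) (by norm_num)).differentiable one_ne_zero
  exact (InnerProductSpace.toDual ℝ F).symm.toContinuousLinearEquiv.differentiable.comp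
    (by fun_prop)

/-- **Lemma 2: derivative of unrolled SGD** (learning rate 1, initialization independent
of the hyperparameters).  `D w_{i+1}(λ) = -∑_{j≤i} [∏_{k<j} (I - H(λ, w_{i-k}(λ)))] ∘
M(λ, w_{i-j}(λ))`, where the product is composition taken left-to-right in increasing `k`. -/
theorem unrolled_sgd_derivative (m n : ℕ)
    (LT : EuclideanSpace ℝ (Fin m) × EuclideanSpace ℝ (Fin n) → ℝ)
    (hLT : ContDiff ℝ 2 LT)
    (g : EuclideanSpace ℝ (Fin m) → EuclideanSpace ℝ (Fin n) → EuclideanSpace ℝ (Fin n))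
    (hg : ∀ l w, g l w = gradient (fun w' => LT (l, w')) w)
    (w : ℕ → EuclideanSpace ℝ (Fin m) → EuclideanSpace ℝ (Fin n))
    (c : EuclideanSpace ℝ (Fin n))
    (hw0 : w 0 = fun _ => c)
    (hrec : ∀ i l, w (i + 1) l = w i l - g l (w i l)) :
    (∀ i, Differentiable ℝ (w i)) ∧
      ∀ (i : ℕ) (l : EuclideanSpace ℝ (Fin m)),
        fderiv ℝ (w (i + 1)) l =
          -(∑ j ∈ Finset.range (i + 1),
              (((List.range j).map (fun k =>
                  (1 : EuclideanSpace ℝ (Fin n) →L[ℝ] EuclideanSpace ℝ (Fin n)) -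
                    fderiv ℝ (g l) (w (i - k) l))).prod).comp
                (fderiv ℝ (fun l' => g l' (w (i - j) l)) l)) := by
  have hg_eq : Function.uncurry g = fun p => gradient (fun w' => LT (p.1, w')) p.2 :=
    funext fun p => hg p.1 p.2
  have hg_diff : Differentiable ℝ (Function.uncurry g) :=
    hg_eq ▸ differentiable_gradient_right hLT
  have hstep : ∀ i, w (i + 1) = fun l => w i l - g l (w i l) := fun i => funext (hrec i)
  have hw_diff : ∀ i, Differentiable ℝ (w i) := by
    intro i
    induction i with
    | zero => rw [hw0]; exact differentiable_const c
    | succ i ih => rw [hstep]; exact ih.sub (hg_diff.comp (differentiable_id.prodMk ih))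
  refine ⟨hw_diff, fun i l => ?_⟩
  refine ContinuousLinearMap.eq_neg_sum_of_eq_comp_sub (D := fun i => fderiv ℝ (w i) l)
    (A := fun i => 1 - fderiv ℝ (g l) (w i l))
    (B := fun i => fderiv ℝ (fun l' => g l' (w i l)) l) ?_ ?_ i
  · rw [hw0]; exact fderiv_const_apply c
  · intro i
    rw [hstep]
    exact fderiv_sub_apply_self (hg_diff _) (hw_diff i l)
end

section
/- (Neumann-SGD, finite unrolling.) Take learning rate α = 1. Fix λ₀ ∈ Λ and a point w₀* ∈ W with g(λ₀, w₀*) = 0. Let w_0 : Λ → W be the constant function with value w₀*, and define w_{i+1}(λ) = w_i(λ) − g(λ, w_i(λ)). Writing H = H(λ₀, w₀*) and M = M(λ₀, w₀*), for every i the Fréchet derivative of w_{i+1} at λ₀ satisfies D w_{i+1}(λ₀) = −( ∑_{j=0}^{i} (I − H)^j ) ∘ M, where I is the identity map on W and (I − H)^j denotes j-fold composition. -/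
/-!
Differentiating the recurrence `w_{i+1}(λ) = w_i(λ) - g(λ, w_i(λ))` by the chain rule, and using
that every iterate stays at the fixed point `w₀*` when `λ = λ₀`, gives
`D w_{i+1} = D w_i - M - H ∘ D w_i = (I - H) ∘ D w_i - M`. Starting from `D w_0 = 0`, this
affine recurrence unrolls to the partial Neumann sum `-(∑_{j ≤ i} (I - H)^j) ∘ M`.
-/

open ContinuousLinearMap Finset

theorem unrolled_apply_eq_of_fixed {Λ W : Type*} [AddGroup W] {G : Λ → W → W} {l₀ : Λ}
    {w₀ : W} {w : ℕ → Λ → W} (hfix : G l₀ w₀ = 0) (hw0 : w 0 = fun _ => w₀)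
    (hrec : ∀ i l, w (i + 1) l = w i l - G l (w i l)) (i : ℕ) : w i l₀ = w₀ := by
  induction i with
  | zero => rw [hw0]
  | succ i ih => rw [hrec, ih, hfix, sub_zero]

section Unrolling

variable {𝕜 Λ W : Type*} [NontriviallyNormedField 𝕜]
  [NormedAddCommGroup Λ] [NormedSpace 𝕜 Λ] [NormedAddCommGroup W] [NormedSpace 𝕜 W]

theorem ContinuousLinearMap.comp_id_prod (D : Λ × W →L[𝕜] W) (B : Λ →L[𝕜] W) :
    D ∘L ((ContinuousLinearMap.id 𝕜 Λ).prod B) = D ∘L inl 𝕜 Λ W + (D ∘L inr 𝕜 Λ W) ∘L B := by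
  ext u
  simp [← map_add]

theorem unrolled_hasFDerivAt {G : Λ → W → W} {l₀ : Λ} {w₀ : W} {w : ℕ → Λ → W}
    {D : Λ × W →L[𝕜] W} (hG : HasFDerivAt (fun p : Λ × W => G p.1 p.2) D (l₀, w₀))
    (hfix : G l₀ w₀ = 0) (hw0 : w 0 = fun _ => w₀)
    (hrec : ∀ i l, w (i + 1) l = w i l - G l (w i l)) (i : ℕ) :
    HasFDerivAt (w i)
      (-((∑ j ∈ range i, (1 - D ∘L inr 𝕜 Λ W) ^ j) ∘L (D ∘L inl 𝕜 Λ W))) l₀ := by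
  induction i with
  | zero => simpa [hw0] using hasFDerivAt_const w₀ l₀
  | succ i ih =>
    rw [← unrolled_apply_eq_of_fixed hfix hw0 hrec i] at hG
    have hcomp := hG.comp l₀ ((hasFDerivAt_id l₀).prodMk ih)
    have hstep : HasFDerivAt (fun l => w i l - G l (w i l)) _ l₀ := ih.sub hcomp
    rw [show w (i + 1) = fun l => w i l - G l (w i l) from funext (hrec i)]
    convert hstep using 1
    rw [comp_id_prod, geom_sum_succ]
    generalize ∑ j ∈ range i, (1 - D ∘L inr 𝕜 Λ W) ^ j = S
    generalize D ∘L inl 𝕜 Λ W = M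
    generalize D ∘L inr 𝕜 Λ W = H
    rw [comp_neg, ← comp_assoc, ← ContinuousLinearMap.mul_def, sub_mul, one_mul, add_comp,
      sub_comp, one_def, id_comp]
    abel

end Unrolling

theorem ContDiff.partialGradient {Λ W : Type*} [NormedAddCommGroup Λ] [NormedSpace ℝ Λ]
    [NormedAddCommGroup W] [InnerProductSpace ℝ W] [CompleteSpace W]
    {L : Λ × W → ℝ} {k : WithTop ℕ∞} (hL : ContDiff ℝ (k + 1) L) :
    ContDiff ℝ k (fun p : Λ × W => gradient (fun w' => L (p.1, w')) p.2) := by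
  have hpartial : ContDiff ℝ k (fun p : Λ × W => fderiv ℝ (fun w' => L (p.1, w')) p.2) :=
    ContDiff.fderiv (f := fun p w' => L (p.1, w'))
      (hL.comp (contDiff_fst.fst.prodMk contDiff_snd)) contDiff_snd le_rfl
  exact (InnerProductSpace.toDual ℝ W).symm.contDiff.comp hpartial

/-- **Neumann-SGD, finite unrolling** (learning rate 1).  Starting unrolled SGD at a fixed
point `w₀*` of the training gradient, the derivative of the `(i+1)`-st iterate at `l₀` is
`D w_{i+1}(l₀) = -(∑_{j=0}^{i} (I - H)^j) ∘ M`. -/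
theorem neumann_sgd_finite (m n : ℕ)
    (LT : EuclideanSpace ℝ (Fin m) × EuclideanSpace ℝ (Fin n) → ℝ)
    (hLT : ContDiff ℝ 2 LT)
    (g : EuclideanSpace ℝ (Fin m) → EuclideanSpace ℝ (Fin n) → EuclideanSpace ℝ (Fin n))
    (hg : ∀ l w, g l w = gradient (fun w' => LT (l, w')) w)
    (l₀ : EuclideanSpace ℝ (Fin m)) (wstar : EuclideanSpace ℝ (Fin n))
    (hfix : g l₀ wstar = 0)
    (w : ℕ → EuclideanSpace ℝ (Fin m) → EuclideanSpace ℝ (Fin n))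
    (hw0 : w 0 = fun _ => wstar)
    (hrec : ∀ i l, w (i + 1) l = w i l - g l (w i l)) :
    ∀ i : ℕ,
      fderiv ℝ (w (i + 1)) l₀ =
        -((∑ j ∈ Finset.range (i + 1),
            ((1 : EuclideanSpace ℝ (Fin n) →L[ℝ] EuclideanSpace ℝ (Fin n)) -
              fderiv ℝ (g l₀) wstar) ^ j).comp
          (fderiv ℝ (fun l => g l wstar) l₀)) := by
  have hg_contDiff : ContDiff ℝ 1 (fun p : _ × _ => g p.1 p.2) := by
    simp_rw [hg]
    exact ContDiff.partialGradient (k := 1) hLT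
  set D := fderiv ℝ (fun p : _ × _ => g p.1 p.2) (l₀, wstar)
  have hD : HasFDerivAt _ D (l₀, wstar) :=
    (hg_contDiff.differentiable one_ne_zero (l₀, wstar)).hasFDerivAt
  have hH : HasFDerivAt (g l₀) (D ∘L inr ℝ _ _) wstar :=
    hD.comp wstar (hasFDerivAt_prodMk_right l₀ wstar)
  have hM : HasFDerivAt (fun l => g l wstar) (D ∘L inl ℝ _ _) l₀ :=
    hD.comp (f := fun l => (l, wstar)) l₀ (hasFDerivAt_prodMk_left l₀ wstar)
  intro i
  rw [hH.fderiv, hM.fderiv, (unrolled_hasFDerivAt hD hfix hw0 hrec (i + 1)).fderiv]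
end

section
/- (Neumann-SGD, limit.) Take learning rate α = 1. Fix λ₀ ∈ Λ and a point w₀* ∈ W with g(λ₀, w₀*) = 0. Let w_0 : Λ → W be the constant function with value w₀*, and define w_{i+1}(λ) = w_i(λ) − g(λ, w_i(λ)). Write H = H(λ₀, w₀*) and M = M(λ₀, w₀*). If the operator norm of I − H is strictly less than 1, then H is invertible and the Fréchet derivatives of the iterates at λ₀ converge: lim_{i→∞} D w_{i+1}(λ₀) = −H⁻¹ ∘ M. -/
open Topology Filter

/-!
At `λ₀` every iterate stays at the stationary point `w₀*`, so the chain rule turns the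
recurrence into `D w_{i+1}(λ₀) = (I - H) ∘ D w_i(λ₀) - M` with `D w_0(λ₀) = 0`, whence
`D w_i(λ₀) = -(∑_{k<i} (I - H)^k) ∘ M`. When `‖I - H‖ < 1` this Neumann series converges
to `H⁻¹`.
-/

open ContinuousLinearMap Finset

section PartialGradient

variable {E F : Type*} [NormedAddCommGroup E] [NormedSpace ℝ E]
  [NormedAddCommGroup F] [InnerProductSpace ℝ F] [CompleteSpace F]

theorem gradient_comp_prodMk_right {f : E × F → ℝ} {x : E} {y : F}
    (hf : DifferentiableAt ℝ f (x, y)) :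
    gradient (fun y' => f (x, y')) y =
      (InnerProductSpace.toDual ℝ F).symm ((fderiv ℝ f (x, y)).comp (inr ℝ E F)) :=
  congrArg _ (hf.hasFDerivAt.comp y (hasFDerivAt_prodMk_right x y)).fderiv

theorem ContDiff.partialGradient_s4 {n : WithTop ℕ∞} {f : E × F → ℝ} (hf : ContDiff ℝ (n + 1) f) :
    ContDiff ℝ n fun p : E × F => gradient (fun y => f (p.1, y)) p.2 := by
  have hdiff : Differentiable ℝ f := hf.differentiable (by simp)
  have hcomp : ContDiff ℝ n fun L : E × F →L[ℝ] ℝ => L.comp (inr ℝ E F) :=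
    ((compL ℝ F (E × F) ℝ).flip (inr ℝ E F)).contDiff
  simp_rw [gradient_comp_prodMk_right (hdiff _)]
  exact (InnerProductSpace.toDual ℝ F).symm.contDiff.comp (hcomp.comp (hf.fderiv_right le_rfl))

end PartialGradient

theorem unrolledSGD_apply_of_stationary {α β : Type*} [AddGroup β] {g : α → β → β}
    {w : ℕ → α → β} {x₀ : α} {y₀ : β} (hfix : g x₀ y₀ = 0) (hw0 : w 0 = fun _ => y₀)
    (hrec : ∀ i x, w (i + 1) x = w i x - g x (w i x)) (i : ℕ) : w i x₀ = y₀ := by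
  induction i with
  | zero => rw [hw0]
  | succ i ih => rw [hrec, ih, hfix, sub_zero]

section UnrolledSGD

variable {𝕜 E F : Type*} [NontriviallyNormedField 𝕜]
  [NormedAddCommGroup E] [NormedSpace 𝕜 E] [NormedAddCommGroup F] [NormedSpace 𝕜 F]
  {g : E → F → F} {D : E × F →L[𝕜] F} {x₀ : E} {y₀ : F}

theorem HasFDerivAt.partial_fst (hD : HasFDerivAt (Function.uncurry g) D (x₀, y₀)) :
    HasFDerivAt (fun x => g x y₀) (D.comp (inl 𝕜 E F)) x₀ :=
  hD.comp (g := Function.uncurry g) x₀ (hasFDerivAt_prodMk_left (𝕜 := 𝕜) x₀ y₀)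

theorem HasFDerivAt.partial_snd (hD : HasFDerivAt (Function.uncurry g) D (x₀, y₀)) :
    HasFDerivAt (g x₀) (D.comp (inr 𝕜 E F)) y₀ :=
  hD.comp (g := Function.uncurry g) y₀ (hasFDerivAt_prodMk_right x₀ y₀)

theorem HasFDerivAt.sgdStep {v : E → F} {A : E →L[𝕜] F} (hv : HasFDerivAt v A x₀)
    (hD : HasFDerivAt (Function.uncurry g) D (x₀, v x₀)) :
    HasFDerivAt (fun x => v x - g x (v x))
      (A - (D.comp (inl 𝕜 E F) + (D.comp (inr 𝕜 E F)).comp A)) x₀ := by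
  have hchain : D.comp ((ContinuousLinearMap.id 𝕜 E).prod A) =
      D.comp (inl 𝕜 E F) + (D.comp (inr 𝕜 E F)).comp A := by
    ext x
    simp [← map_add]
  rw [← hchain]
  exact hv.sub (hD.comp (g := Function.uncurry g) x₀ ((hasFDerivAt_id x₀).prodMk hv))

variable {w : ℕ → E → F}

theorem hasFDerivAt_unrolledSGD (hD : HasFDerivAt (Function.uncurry g) D (x₀, y₀))
    (hfix : g x₀ y₀ = 0) (hw0 : w 0 = fun _ => y₀)
    (hrec : ∀ i x, w (i + 1) x = w i x - g x (w i x)) (i : ℕ) :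
    HasFDerivAt (w i)
      (-((∑ k ∈ range i, (1 - D.comp (inr 𝕜 E F)) ^ k).comp (D.comp (inl 𝕜 E F)))) x₀ := by
  induction i with
  | zero => simpa [hw0] using hasFDerivAt_const y₀ x₀
  | succ i ih =>
    have hstep := ih.sgdStep (by rwa [unrolledSGD_apply_of_stationary hfix hw0 hrec i])
    rw [funext (hrec i)]
    convert hstep using 1
    rw [geom_sum_succ]
    simp only [add_comp, sub_comp, ContinuousLinearMap.mul_def, ContinuousLinearMap.one_def,
      id_comp, comp_assoc, comp_neg]
    abel

end UnrolledSGD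

theorem tendsto_geom_sum_one_sub_nhds_inverse {R : Type*} [NormedRing R]
    [HasSummableGeomSeries R] {x : R} (h : ‖1 - x‖ < 1) :
    Tendsto (fun i => ∑ k ∈ range i, (1 - x) ^ k) atTop (𝓝 (Ring.inverse x)) := by
  simpa using (hasSum_geom_series_inverse (1 - x) h).tendsto_sum_nat

theorem isUnit_of_norm_one_sub_lt_one {R : Type*} [NormedRing R] [HasSummableGeomSeries R]
    {x : R} (h : ‖1 - x‖ < 1) : IsUnit x := by
  simpa using isUnit_one_sub_of_norm_lt_one h

/-- **Neumann-SGD, limit** (learning rate 1).  Starting unrolled SGD at a fixed point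
`w₀*` of the training gradient, if `‖I - H‖ < 1` then `H` is invertible and
`D w_{i+1}(l₀) → -H⁻¹ ∘ M` as `i → ∞`. -/
theorem neumann_sgd_limit (m n : ℕ)
    (LT : EuclideanSpace ℝ (Fin m) × EuclideanSpace ℝ (Fin n) → ℝ)
    (hLT : ContDiff ℝ 2 LT)
    (g : EuclideanSpace ℝ (Fin m) → EuclideanSpace ℝ (Fin n) → EuclideanSpace ℝ (Fin n))
    (hg : ∀ l w, g l w = gradient (fun w' => LT (l, w')) w)
    (l₀ : EuclideanSpace ℝ (Fin m)) (wstar : EuclideanSpace ℝ (Fin n))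
    (hfix : g l₀ wstar = 0)
    (w : ℕ → EuclideanSpace ℝ (Fin m) → EuclideanSpace ℝ (Fin n))
    (hw0 : w 0 = fun _ => wstar)
    (hrec : ∀ i l, w (i + 1) l = w i l - g l (w i l))
    (hcontr : ‖(1 : EuclideanSpace ℝ (Fin n) →L[ℝ] EuclideanSpace ℝ (Fin n)) -
        fderiv ℝ (g l₀) wstar‖ < 1) :
    IsUnit (fderiv ℝ (g l₀) wstar) ∧
      Tendsto (fun i => fderiv ℝ (w (i + 1)) l₀) atTop
        (𝓝 (-((Ring.inverse (fderiv ℝ (g l₀) wstar)).comp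
          (fderiv ℝ (fun l => g l wstar) l₀)))) := by
  have hC1 : ContDiff ℝ 1 (Function.uncurry g) := by
    rw [show Function.uncurry g = _ from funext fun p => hg p.1 p.2]
    exact hLT.partialGradient_s4
  have hD := (hC1.differentiable one_ne_zero (l₀, wstar)).hasFDerivAt
  rw [hD.partial_snd.fderiv] at hcontr ⊢
  rw [hD.partial_fst.fderiv]
  refine ⟨isUnit_of_norm_one_sub_lt_one hcontr, ?_⟩
  simp_rw [fun i => (hasFDerivAt_unrolledSGD hD hfix hw0 hrec (i + 1)).fderiv]
  exact ((continuous_id.clm_comp continuous_const).neg.tendsto _).comp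
    ((tendsto_geom_sum_one_sub_nhds_inverse hcontr).comp (tendsto_add_atTop_nat 1))
end

section
/- (Learning-rate-scaled Neumann-SGD, finite unrolling.) Fix a learning rate α > 0, a point λ₀ ∈ Λ, and w₀* ∈ W with g(λ₀, w₀*) = 0. Let w_0 : Λ → W be the constant function with value w₀*, and define w_{i+1}(λ) = w_i(λ) − α·g(λ, w_i(λ)). Writing H = H(λ₀, w₀*) and M = M(λ₀, w₀*), for every i the Fréchet derivative of w_{i+1} at λ₀ satisfies D w_{i+1}(λ₀) = −α·( ∑_{j=0}^{i} (I − α·H)^j ) ∘ M, where I is the identity map on W and (I − α·H)^j denotes j-fold composition. -/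
open Topology

/-!
Since `w₀*` is a fixed point of the SGD map at `λ₀`, every iterate passes through `w₀*` at `λ₀`,
so the chain rule applied to `w_{i+1}(λ) = w_i(λ) - α g(λ, w_i(λ))` gives the linear recursion
`D_{i+1} = (I - α H) D_i - α M` with `D_0 = 0`, whose solution is the truncated Neumann series.
-/

section PartialDerivatives

variable {𝕜 E F G : Type*} [NontriviallyNormedField 𝕜] [NormedAddCommGroup E] [NormedSpace 𝕜 E]
  [NormedAddCommGroup F] [NormedSpace 𝕜 F] [NormedAddCommGroup G] [NormedSpace 𝕜 G]

theorem HasFDerivAt.partial_left {f : E → F → G} {x₀ : E} {y₀ : F} {D : E × F →L[𝕜] G}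
    (hf : HasFDerivAt (Function.uncurry f) D (x₀, y₀)) :
    HasFDerivAt (fun x => f x y₀) (D.comp (.inl 𝕜 E F)) x₀ := by
  exact hf.comp x₀ (hasFDerivAt_prodMk_left (𝕜 := 𝕜) x₀ y₀)

theorem HasFDerivAt.partial_right {f : E → F → G} {x₀ : E} {y₀ : F} {D : E × F →L[𝕜] G}
    (hf : HasFDerivAt (Function.uncurry f) D (x₀, y₀)) :
    HasFDerivAt (f x₀) (D.comp (.inr 𝕜 E F)) y₀ := by
  exact hf.comp y₀ (hasFDerivAt_prodMk_right x₀ y₀)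

theorem ContinuousLinearMap.comp_id_prod_s5 (D : E × F →L[𝕜] G) (T : E →L[𝕜] F) :
    D.comp ((ContinuousLinearMap.id 𝕜 E).prod T) =
      D.comp (.inl 𝕜 E F) + (D.comp (.inr 𝕜 E F)).comp T := by
  ext x
  simp [← map_add]

theorem DifferentiableAt.hasFDerivAt_comp_graph {f : E → F → G} {v : E → F} {x₀ : E}
    {T : E →L[𝕜] F} (hf : DifferentiableAt 𝕜 (Function.uncurry f) (x₀, v x₀))
    (hv : HasFDerivAt v T x₀) :
    HasFDerivAt (fun x => f x (v x))
      (fderiv 𝕜 (fun x => f x (v x₀)) x₀ + (fderiv 𝕜 (f x₀) (v x₀)).comp T) x₀ := by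
  have hD := hf.hasFDerivAt
  rw [hD.partial_left.fderiv, hD.partial_right.fderiv, ← ContinuousLinearMap.comp_id_prod_s5]
  exact hD.comp x₀ ((hasFDerivAt_id x₀).prodMk hv)

end PartialDerivatives

theorem ContDiff.gradient_right {E F : Type*} [NormedAddCommGroup E] [NormedSpace ℝ E]
    [NormedAddCommGroup F] [InnerProductSpace ℝ F] [CompleteSpace F] {n : WithTop ℕ∞}
    {L : E × F → ℝ} (hL : ContDiff ℝ (n + 1) L) :
    ContDiff ℝ n fun p : E × F => gradient (fun y => L (p.1, y)) p.2 := by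
  have hpartial : ∀ p : E × F,
      fderiv ℝ (fun y => L (p.1, y)) p.2 = (fderiv ℝ L p).comp (.inr ℝ E F) := fun p =>
    HasFDerivAt.partial_right (f := fun x y => L (x, y))
      ((hL.differentiable (by simp)).differentiableAt (x := p)).hasFDerivAt |>.fderiv
  simp only [gradient, hpartial]
  exact (InnerProductSpace.toDual ℝ F).symm.toContinuousLinearEquiv.contDiff.comp
    ((hL.fderiv_right le_rfl).clm_comp contDiff_const)

section UnrolledSGD

theorem unrolled_apply_of_fixedPoint {X F R : Type*} [AddGroup F] [SMulZeroClass R F]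
    {g : X → F → F} {x₀ : X} {y₀ : F} (hfix : g x₀ y₀ = 0) {α : R} {w : ℕ → X → F}
    (hw0 : w 0 = fun _ => y₀) (hrec : ∀ i x, w (i + 1) x = w i x - α • g x (w i x)) :
    ∀ i, w i x₀ = y₀
  | 0 => by rw [hw0]
  | i + 1 => by
    rw [hrec, unrolled_apply_of_fixedPoint hfix hw0 hrec i, hfix, smul_zero, sub_zero]

variable {𝕜 E F : Type*} [NontriviallyNormedField 𝕜] [NormedAddCommGroup E] [NormedSpace 𝕜 E]
  [NormedAddCommGroup F] [NormedSpace 𝕜 F]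

theorem neg_smul_geom_sum_comp_succ (A : F →L[𝕜] F) (M : E →L[𝕜] F) (α : 𝕜) (i : ℕ) :
    A.comp (-(α • (∑ j ∈ Finset.range i, A ^ j).comp M)) - α • M =
      -(α • (∑ j ∈ Finset.range (i + 1), A ^ j).comp M) := by
  rw [geom_sum_succ, ContinuousLinearMap.add_comp, ContinuousLinearMap.mul_def,
    ContinuousLinearMap.comp_assoc, ContinuousLinearMap.one_def, ContinuousLinearMap.id_comp,
    ContinuousLinearMap.comp_neg, ContinuousLinearMap.comp_smul]
  module

theorem hasFDerivAt_unrolled_of_fixedPoint {g : E → F → F} {x₀ : E} {y₀ : F}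
    (hg : DifferentiableAt 𝕜 (Function.uncurry g) (x₀, y₀)) (hfix : g x₀ y₀ = 0) {α : 𝕜}
    {w : ℕ → E → F} (hw0 : w 0 = fun _ => y₀)
    (hrec : ∀ i x, w (i + 1) x = w i x - α • g x (w i x)) (i : ℕ) :
    HasFDerivAt (w i) (-(α • (∑ j ∈ Finset.range i,
      (1 - α • fderiv 𝕜 (g x₀) y₀) ^ j).comp (fderiv 𝕜 (fun x => g x y₀) x₀))) x₀ := by
  induction i with
  | zero => simpa [hw0] using hasFDerivAt_const y₀ x₀
  | succ i ih =>
    have hwi := unrolled_apply_of_fixedPoint hfix hw0 hrec i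
    have hstep := ih.sub (((hwi ▸ hg).hasFDerivAt_comp_graph ih).const_smul α)
    rw [← neg_smul_geom_sum_comp_succ]
    convert hstep using 1
    · exact funext (hrec i)
    · rw [hwi, ContinuousLinearMap.sub_comp, ContinuousLinearMap.smul_comp,
        ContinuousLinearMap.one_def, ContinuousLinearMap.id_comp]
      module

end UnrolledSGD

theorem neumann_sgd_finite_lr_general (m n : ℕ)
    (LT : EuclideanSpace ℝ (Fin m) × EuclideanSpace ℝ (Fin n) → ℝ)
    (hLT : ContDiff ℝ 2 LT)
    (g : EuclideanSpace ℝ (Fin m) → EuclideanSpace ℝ (Fin n) → EuclideanSpace ℝ (Fin n))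
    (hg : ∀ l w, g l w = gradient (fun w' => LT (l, w')) w)
    (α : ℝ)
    (l₀ : EuclideanSpace ℝ (Fin m)) (wstar : EuclideanSpace ℝ (Fin n))
    (hfix : g l₀ wstar = 0)
    (w : ℕ → EuclideanSpace ℝ (Fin m) → EuclideanSpace ℝ (Fin n))
    (hw0 : w 0 = fun _ => wstar)
    (hrec : ∀ i l, w (i + 1) l = w i l - α • g l (w i l)) :
    ∀ i : ℕ,
      fderiv ℝ (w (i + 1)) l₀ =
        -(α • ((∑ j ∈ Finset.range (i + 1),
            ((1 : EuclideanSpace ℝ (Fin n) →L[ℝ] EuclideanSpace ℝ (Fin n)) -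
              α • fderiv ℝ (g l₀) wstar) ^ j).comp
          (fderiv ℝ (fun l => g l wstar) l₀))) := by
  have hg_eq : Function.uncurry g = fun p => gradient (fun w' => LT (p.1, w')) p.2 :=
    funext fun p => hg p.1 p.2
  have hg_diff : DifferentiableAt ℝ (Function.uncurry g) (l₀, wstar) := by
    rw [hg_eq]
    exact ((ContDiff.gradient_right (n := 1) hLT).differentiable one_ne_zero).differentiableAt
  exact fun i => (hasFDerivAt_unrolled_of_fixedPoint hg_diff hfix hw0 hrec (i + 1)).fderiv

/-- **Learning-rate-scaled Neumann-SGD, finite unrolling.**  Starting unrolled SGD with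
learning rate `α > 0` at a fixed point `w₀*` of the training gradient,
`D w_{i+1}(l₀) = -α • (∑_{j=0}^{i} (I - α • H)^j) ∘ M`. -/
theorem neumann_sgd_finite_lr (m n : ℕ)
    (LT : EuclideanSpace ℝ (Fin m) × EuclideanSpace ℝ (Fin n) → ℝ)
    (hLT : ContDiff ℝ 2 LT)
    (g : EuclideanSpace ℝ (Fin m) → EuclideanSpace ℝ (Fin n) → EuclideanSpace ℝ (Fin n))
    (hg : ∀ l w, g l w = gradient (fun w' => LT (l, w')) w)
    (α : ℝ) (hα : 0 < α)
    (l₀ : EuclideanSpace ℝ (Fin m)) (wstar : EuclideanSpace ℝ (Fin n))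
    (hfix : g l₀ wstar = 0)
    (w : ℕ → EuclideanSpace ℝ (Fin m) → EuclideanSpace ℝ (Fin n))
    (hw0 : w 0 = fun _ => wstar)
    (hrec : ∀ i l, w (i + 1) l = w i l - α • g l (w i l)) :
    ∀ i : ℕ,
      fderiv ℝ (w (i + 1)) l₀ =
        -(α • ((∑ j ∈ Finset.range (i + 1),
            ((1 : EuclideanSpace ℝ (Fin n) →L[ℝ] EuclideanSpace ℝ (Fin n)) -
              α • fderiv ℝ (g l₀) wstar) ^ j).comp
          (fderiv ℝ (fun l => g l wstar) l₀))) :=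
  neumann_sgd_finite_lr_general m n LT hLT g hg α l₀ wstar hfix w hw0 hrec
end

section
/- (Exact IFT hypergradient.) Suppose w* : Λ → W is differentiable at λ₀, there is a neighborhood U of λ₀ with g(λ, w*(λ)) = 0 for all λ ∈ U, and the training Hessian H = H(λ₀, w*(λ₀)) is an invertible linear map. Let L_V : Λ × W → ℝ be a validation loss differentiable at (λ₀, w*(λ₀)). Then the map L_V* : λ ↦ L_V(λ, w*(λ)) is differentiable at λ₀ with Fréchet derivative D L_V*(λ₀) = ∂_λ L_V(λ₀, w*(λ₀)) − ∂_w L_V(λ₀, w*(λ₀)) ∘ H⁻¹ ∘ M(λ₀, w*(λ₀)), where ∂_λ L_V and ∂_w L_V denote the partial Fréchet derivatives in the first and second arguments. -/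
/-!
Differentiating the identity `g (λ, w* λ) = 0` at `λ₀` by the chain rule gives
`M + H ∘ Dw* = 0`, so `Dw* = -H⁻¹ ∘ M`. A second application of the chain rule, now to
`λ ↦ L_V (λ, w* λ)`, gives `∂_λ L_V + ∂_w L_V ∘ Dw*`, and substituting `Dw*` yields the formula.
-/

open Topology ContinuousLinearMap

section TotalDerivative

variable {𝕜 : Type*} [NontriviallyNormedField 𝕜]
  {E F X : Type*} [NormedAddCommGroup E] [NormedSpace 𝕜 E]
  [NormedAddCommGroup F] [NormedSpace 𝕜 F] [NormedAddCommGroup X] [NormedSpace 𝕜 X]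

theorem DifferentiableAt.fderiv_comp_prodMk_left {φ : E × F → X} {a : E} {b : F}
    (hφ : DifferentiableAt 𝕜 φ (a, b)) :
    fderiv 𝕜 (fun x => φ (x, b)) a = (fderiv 𝕜 φ (a, b)).comp (inl 𝕜 E F) :=
  (hφ.hasFDerivAt.comp a (hasFDerivAt_prodMk_left a b)).fderiv

theorem DifferentiableAt.fderiv_comp_prodMk_right {φ : E × F → X} {a : E} {b : F}
    (hφ : DifferentiableAt 𝕜 φ (a, b)) :
    fderiv 𝕜 (fun y => φ (a, y)) b = (fderiv 𝕜 φ (a, b)).comp (inr 𝕜 E F) :=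
  (hφ.hasFDerivAt.comp b (hasFDerivAt_prodMk_right a b)).fderiv

theorem DifferentiableAt.hasFDerivAt_comp_graph_s8 {φ : E × F → X} {w : E → F} {a : E}
    (hφ : DifferentiableAt 𝕜 φ (a, w a)) (hw : DifferentiableAt 𝕜 w a) :
    HasFDerivAt (fun x => φ (x, w x))
      (fderiv 𝕜 (fun x => φ (x, w a)) a +
        (fderiv 𝕜 (fun y => φ (a, y)) (w a)).comp (fderiv 𝕜 w a)) a := by
  rw [hφ.fderiv_comp_prodMk_left, hφ.fderiv_comp_prodMk_right]
  refine (hφ.hasFDerivAt.comp a ((hasFDerivAt_id a).prodMk hw.hasFDerivAt)).congr_fderiv ?_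
  ext x
  simp only [add_apply, comp_apply, prod_apply, inl_apply, inr_apply, id_apply, ← map_add,
    Prod.mk_add_mk, add_zero, zero_add]

variable {Y : Type*} [NormedAddCommGroup Y] [NormedSpace 𝕜 Y]

theorem fderiv_eq_neg_comp_of_eventually_comp_graph_eq_zero {G : E × F → Y} {w : E → F} {a : E}
    (hG : DifferentiableAt 𝕜 G (a, w a)) (hw : DifferentiableAt 𝕜 w a)
    (hzero : ∀ᶠ x in 𝓝 a, G (x, w x) = 0) (H : F ≃L[𝕜] Y)
    (hH : (H : F →L[𝕜] Y) = fderiv 𝕜 (fun y => G (a, y)) (w a)) :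
    fderiv 𝕜 w a = -((H.symm : Y →L[𝕜] F).comp (fderiv 𝕜 (fun x => G (x, w a)) a)) := by
  have hsum : fderiv 𝕜 (fun x => G (x, w a)) a + (H : F →L[𝕜] Y).comp (fderiv 𝕜 w a) = 0 := by
    rw [hH]
    exact (hG.hasFDerivAt_comp_graph_s8 hw).unique
      ((hasFDerivAt_const 0 a).congr_of_eventuallyEq hzero)
  rw [eq_neg_of_add_eq_zero_left hsum]
  ext x
  simp

end TotalDerivative

theorem ContDiff.gradient_comp_prodMk_right {E F : Type*} [NormedAddCommGroup E]
    [NormedSpace ℝ E] [NormedAddCommGroup F] [InnerProductSpace ℝ F] [CompleteSpace F]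
    {f : E × F → ℝ} {m n : WithTop ℕ∞} (hf : ContDiff ℝ n f) (hmn : m + 1 ≤ n) :
    ContDiff ℝ m fun p : E × F => gradient (fun y => f (p.1, y)) p.2 := by
  have hf' : Differentiable ℝ f := (hf.of_le (le_add_self.trans hmn)).differentiable one_ne_zero
  have hpartial : (fun p : E × F => gradient (fun y => f (p.1, y)) p.2) =
      fun p => (InnerProductSpace.toDual ℝ F).symm ((fderiv ℝ f p).comp (inr ℝ E F)) := by
    ext1 p
    rw [gradient, (hf' p).fderiv_comp_prodMk_right]
  rw [hpartial]
  exact (InnerProductSpace.toDual ℝ F).symm.contDiff.comp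
    (((compL ℝ F (E × F) ℝ).flip (inr ℝ E F)).contDiff.comp (hf.fderiv_right hmn))

/-- **Exact IFT hypergradient.**  If `w*` is differentiable at `l₀`, `g (λ, w* λ) = 0` on a
neighborhood of `l₀`, the training Hessian `H = H(l₀, w* l₀)` is invertible, and the
validation loss `L_V` is differentiable at `(l₀, w* l₀)`, then `L_V*(λ) = L_V(λ, w* λ)` is
differentiable at `l₀` with
`D L_V*(l₀) = ∂_λ L_V(l₀, w* l₀) - ∂_w L_V(l₀, w* l₀) ∘ H⁻¹ ∘ M(l₀, w* l₀)`. -/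
theorem exact_ift_hypergradient (m n : ℕ)
    (LT : EuclideanSpace ℝ (Fin m) × EuclideanSpace ℝ (Fin n) → ℝ)
    (hLT : ContDiff ℝ 2 LT)
    (g : EuclideanSpace ℝ (Fin m) → EuclideanSpace ℝ (Fin n) → EuclideanSpace ℝ (Fin n))
    (hg : ∀ l w, g l w = gradient (fun w' => LT (l, w')) w)
    (wstar : EuclideanSpace ℝ (Fin m) → EuclideanSpace ℝ (Fin n))
    (l₀ : EuclideanSpace ℝ (Fin m))
    (hdiff : DifferentiableAt ℝ wstar l₀)
    (hfix : ∀ᶠ l in 𝓝 l₀, g l (wstar l) = 0)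
    (Hinv : EuclideanSpace ℝ (Fin n) ≃L[ℝ] EuclideanSpace ℝ (Fin n))
    (hH : (Hinv : EuclideanSpace ℝ (Fin n) →L[ℝ] EuclideanSpace ℝ (Fin n)) =
      fderiv ℝ (g l₀) (wstar l₀))
    (LV : EuclideanSpace ℝ (Fin m) × EuclideanSpace ℝ (Fin n) → ℝ)
    (hLV : DifferentiableAt ℝ LV (l₀, wstar l₀)) :
    DifferentiableAt ℝ (fun l => LV (l, wstar l)) l₀ ∧
      fderiv ℝ (fun l => LV (l, wstar l)) l₀ =
        fderiv ℝ (fun l => LV (l, wstar l₀)) l₀ -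
          (fderiv ℝ (fun v => LV (l₀, v)) (wstar l₀)).comp
            ((Hinv.symm : EuclideanSpace ℝ (Fin n) →L[ℝ] EuclideanSpace ℝ (Fin n)).comp
              (fderiv ℝ (fun l => g l (wstar l₀)) l₀)) := by
  have hG : DifferentiableAt ℝ (fun p => g p.1 p.2) (l₀, wstar l₀) := by
    simp only [hg]
    exact (hLT.gradient_comp_prodMk_right le_rfl).differentiable one_ne_zero _
  have hDw := fderiv_eq_neg_comp_of_eventually_comp_graph_eq_zero hG hdiff hfix Hinv hH
  have hLVw := hLV.hasFDerivAt_comp_graph_s8 hdiff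
  refine ⟨hLVw.differentiableAt, ?_⟩
  rw [hLVw.fderiv, hDw, comp_neg, sub_eq_add_neg]
end
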